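/- Let s, δ, n be integers with 3 ≤ s ≤ δ − 1, n ≥ 6δ − 4 and n ≥ (δ² + 7δ + 4)/6. Then e(K_δ ∨ (K_{n-2δ+1} ∪ (δ-1)K_1)) − e(K_s ∨ (K_{n-s-(δ+1-s)(s-1)} ∪ (s-1)K_{δ+1-s})) = (1/2)(δ−s)(s³ − (δ+5)s² + (2n+δ+7)s − 4n + 3δ − 3) > 0. -/

import Mathlib

/-!
The difference of the two edge counts factors as `(δ - s) / 2` times a cubic `p(s, δ, n)`.
With `a = s - 3` and `b = δ - 1 - s`,
`3 p = a (a² - a b + b²) + (δ - 1)² + 3 + (s - 2) (6 n - δ² - 7 δ - 4)`,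
where every summand is nonnegative once `s ≥ 3` and `6 n ≥ δ² + 7 δ + 4`, and `(δ - 1)² + 3 > 0`.
-/

section

variable {K : Type*} [Field K]

-- `e(K_δ ∨ (K_{n-2δ+1} ∪ (δ-1)K_1))`
def edgesJoinIsolated (δ n : K) : K :=
  (n - δ + 1) * (n - δ) / 2 + δ * (δ - 1)

-- `e(K_s ∨ (K_{n-s-(δ+1-s)(s-1)} ∪ (s-1)K_{δ+1-s}))`
def edgesJoinCliques (s δ n : K) : K :=
  (n - (δ + 1 - s) * (s - 1)) * (n - (δ + 1 - s) * (s - 1) - 1) / 2 +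
    s * (s - 1) * (δ + 1 - s) + (s - 1) * ((δ + 1 - s) * (δ + 1 - s - 1) / 2)

def gapCubic (s δ n : K) : K :=
  s ^ 3 - (δ + 5) * s ^ 2 + (2 * n + δ + 7) * s - 4 * n + 3 * δ - 3

theorem edgesJoinIsolated_sub_edgesJoinCliques [CharZero K] (s δ n : K) :
    edgesJoinIsolated δ n - edgesJoinCliques s δ n = 1 / 2 * (δ - s) * gapCubic s δ n := by
  unfold edgesJoinIsolated edgesJoinCliques gapCubic
  ring

theorem three_mul_gapCubic (s δ n : K) :
    3 * gapCubic s δ n = (s - 3) * ((s - 3) ^ 2 - (s - 3) * (δ - 1 - s) + (δ - 1 - s) ^ 2) +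
      ((δ - 1) ^ 2 + 3) + (s - 2) * (6 * n - (δ ^ 2 + 7 * δ + 4)) := by
  unfold gapCubic
  ring

end

theorem gapCubic_pos {K : Type*} [Field K] [LinearOrder K] [IsStrictOrderedRing K] {s δ n : K}
    (hs : 3 ≤ s) (hn : (δ ^ 2 + 7 * δ + 4) / 6 ≤ n) : 0 < gapCubic s δ n := by
  have hform : 0 ≤ (s - 3) ^ 2 - (s - 3) * (δ - 1 - s) + (δ - 1 - s) ^ 2 := by
    nlinarith [sq_nonneg (s - 3 - (δ - 1 - s)), sq_nonneg (s - 3), sq_nonneg (δ - 1 - s)]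
  have hn' : 0 ≤ 6 * n - (δ ^ 2 + 7 * δ + 4) := by linarith
  have h3 : 0 < 3 * gapCubic s δ n := by
    rw [three_mul_gapCubic]
    have := mul_nonneg (sub_nonneg.2 hs) hform
    have := mul_nonneg (by linarith : (0 : K) ≤ s - 2) hn'
    positivity
  linarith

theorem edgeCount_diff_case3_general (s δ n : ℕ) (hs : 3 ≤ s) (hsd : s ≤ δ - 1)
    (hn2 : ((δ : ℝ) ^ 2 + 7 * δ + 4) / 6 ≤ (n : ℝ)) :
    (((n : ℝ) - δ + 1) * ((n : ℝ) - δ) / 2 + δ * (δ - 1)) -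
        (((n : ℝ) - (δ + 1 - s) * (s - 1)) * ((n : ℝ) - (δ + 1 - s) * (s - 1) - 1) / 2 +
          s * (s - 1) * (δ + 1 - s) + (s - 1) * ((δ + 1 - s) * (δ + 1 - s - 1) / 2)) =
      (1 / 2) * ((δ : ℝ) - s) *
        ((s : ℝ) ^ 3 - (δ + 5) * s ^ 2 + (2 * n + δ + 7) * s - 4 * n + 3 * δ - 3) ∧
    0 < (1 / 2) * ((δ : ℝ) - s) *
        ((s : ℝ) ^ 3 - (δ + 5) * s ^ 2 + (2 * n + δ + 7) * s - 4 * n + 3 * δ - 3) := by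
  have hsδ : (s : ℝ) < δ := by exact_mod_cast (by omega : s < δ)
  have hgap : 0 < gapCubic (s : ℝ) δ n := gapCubic_pos (by exact_mod_cast hs) hn2
  exact ⟨edgesJoinIsolated_sub_edgesJoinCliques (s : ℝ) δ n,
    mul_pos (mul_pos one_half_pos (sub_pos.2 hsδ)) hgap⟩

theorem edgeCount_diff_case3 (s δ n : ℕ) (hs : 3 ≤ s) (hsd : s ≤ δ - 1)
    (hn1 : 6 * δ - 4 ≤ n) (hn2 : ((δ : ℝ) ^ 2 + 7 * δ + 4) / 6 ≤ (n : ℝ)) :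
    (((n : ℝ) - δ + 1) * ((n : ℝ) - δ) / 2 + δ * (δ - 1)) -
        (((n : ℝ) - (δ + 1 - s) * (s - 1)) * ((n : ℝ) - (δ + 1 - s) * (s - 1) - 1) / 2 +
          s * (s - 1) * (δ + 1 - s) + (s - 1) * ((δ + 1 - s) * (δ + 1 - s - 1) / 2)) =
      (1 / 2) * ((δ : ℝ) - s) *
        ((s : ℝ) ^ 3 - (δ + 5) * s ^ 2 + (2 * n + δ + 7) * s - 4 * n + 3 * δ - 3) ∧
    0 < (1 / 2) * ((δ : ℝ) - s) *
        ((s : ℝ) ^ 3 - (δ + 5) * s ^ 2 + (2 * n + δ + 7) * s - 4 * n + 3 * δ - 3) :=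
  edgeCount_diff_case3_general s δ n hs hsd hn2
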